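/- Let n be a natural number and ε > 0. Let X = OnePoint (EuclideanSpace ℝ (Fin n)) be the one-point compactification of ℝⁿ, and let C ⊆ X be the closed subset consisting of the point at infinity together with all v ∈ EuclideanSpace ℝ (Fin n) with ε ≤ ‖v‖. Let X/C denote the quotient topological space obtained by identifying all points of C to a single point. Then the quotient map X → X/C is a homotopy equivalence: there is a continuous map X/C → X such that both composites are homotopic to the respective identity maps. (The levelwise content of the Corollary in Section 3 asserting that the unit map 𝕊_k → 𝕊_{k,ε} — given levelwise by the Pontrjagin–Thom collapse S^{mk} → B̄_ε(0)/∂B̄_ε(0) — is a level weak equivalence.) -/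

import Mathlib

open Metric

noncomputable section

/-- `ℝⁿ` with the Euclidean norm. -/
abbrev E (n : ℕ) := EuclideanSpace ℝ (Fin n)

/-- The one-point compactification `S^n` of `ℝⁿ`. -/
abbrev X (n : ℕ) := OnePoint (E n)

/-- The closed subset of the one-point compactification consisting of the point at
infinity together with all `v` with `ε ≤ ‖v‖`. -/
def C (n : ℕ) (ε : ℝ) : Set (X n) :=
  {OnePoint.infty} ∪ (OnePoint.some '' {v : E n | ε ≤ ‖v‖})

/-- The setoid on `X` identifying all points of `C` to a single point (and nothing else). -/
def collapseSetoid (n : ℕ) (ε : ℝ) : Setoid (X n) where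
  r x y := x = y ∨ (x ∈ C n ε ∧ y ∈ C n ε)
  iseqv := by
    constructor
    · intro x; exact Or.inl rfl
    · rintro x y (rfl | h); exacts [Or.inl rfl, Or.inr ⟨h.2, h.1⟩]
    · rintro x y z (rfl | h) (rfl | h')
      exacts [Or.inl rfl, Or.inr h', Or.inr h, Or.inr ⟨h.1, h'.2⟩]

/-- The quotient space `X/C`, with the quotient topology. -/
def XmodC (n : ℕ) (ε : ℝ) : Type := Quotient (collapseSetoid n ε)

instance (n : ℕ) (ε : ℝ) : TopologicalSpace (XmodC n ε) :=
  instTopologicalSpaceQuotient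

/-- The quotient map `X → X/C`. -/
def collapseMap (n : ℕ) (ε : ℝ) : C(X n, XmodC n ε) :=
  ⟨Quotient.mk (collapseSetoid n ε), continuous_quotient_mk'⟩

/-!
For `t ∈ [0, 1]` let `H_t(v) = v / ((1 - t) · max (ε - ‖v‖) 0 + t)` on `ℝⁿ` and `H_t(∞) = ∞`,
where `v / 0 = ∞`. Then `H_1 = id`, every `H_t` maps `C` into `C` (the denominator is `t ≤ 1`
there), and `H_0` crushes `C` to `∞`, so it factors through `X/C` as some `g`. Now `H` is a
homotopy from `g ∘ q` to the identity, and it descends to a homotopy from `q ∘ g` to the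
identity of `X/C`. Continuity of `H` at the points sent to `∞` comes from `‖H_t(v)‖ → ∞`
there; properness of `ℝⁿ` is what makes `H` continuous at `(t, ∞)`.
-/

open OnePoint Filter Topology unitInterval

namespace ContinuousMap.Homotopy

variable {Y : Type*} [TopologicalSpace Y] (s : Setoid Y) {f : C(Y, Y)}

def homotopyEquivQuotient (F : f.Homotopy (ContinuousMap.id Y)) (hf : ∀ a b, s a b → f a = f b)
    (hF : ∀ t a b, s a b → s (F (t, a)) (F (t, b))) : Y ≃ₕ Quotient s where
  toFun := ⟨Quotient.mk s, continuous_quotient_mk'⟩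
  invFun := ⟨Quotient.lift f hf, isQuotientMap_quotient_mk'.continuous_iff.2 f.continuous⟩
  left_inv := ⟨F.cast (ContinuousMap.ext fun _ => rfl) rfl⟩
  right_inv := ⟨
    { toFun := fun p => Quotient.map' (fun y => F (p.1, y)) (hF p.1) p.2
      continuous_toFun := isQuotientMap_quotient_mk'.continuous_lift_prod_right
        (continuous_quotient_mk'.comp F.continuous)
      map_zero_left := Quotient.ind fun y => congrArg (Quotient.mk s) (F.apply_zero y)
      map_one_left := Quotient.ind fun y => congrArg (Quotient.mk s) (F.apply_one y) }⟩

end ContinuousMap.Homotopy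

namespace OnePoint

lemma tendsto_nhds_infty_of_eventually_notMem_image_ball {V Z : Type*} [PseudoMetricSpace V]
    {l : Filter Z} {f : Z → OnePoint V} (x₀ : V)
    (h : ∀ R, ∀ᶠ z in l, f z ∉ ((↑) : V → OnePoint V) '' ball x₀ R) : Tendsto f l (𝓝 ∞) := by
  refine hasBasis_nhds_infty.tendsto_right_iff.2 fun K ⟨_, hK⟩ => ?_
  obtain ⟨R, hKR⟩ := hK.isBounded.subset_ball x₀
  filter_upwards [h R] with z hz
  rw [← compl_image_coe]
  exact fun hzK => hz (Set.image_mono hKR hzK)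

variable {V : Type*} [NormedAddCommGroup V] [NormedSpace ℝ V]

def divOrInfty (c : ℝ) (v : V) : OnePoint V :=
  if c = 0 then ∞ else ↑(c⁻¹ • v)

lemma divOrInfty_notMem_image_ball {c R : ℝ} {v : V} (h : R * |c| ≤ ‖v‖) :
    divOrInfty c v ∉ ((↑) : V → OnePoint V) '' ball 0 R := by
  unfold divOrInfty
  split_ifs with hc
  · exact infty_notMem_image_coe
  · rw [coe_injective.mem_set_image, mem_ball_zero_iff, norm_smul, norm_inv, Real.norm_eq_abs,
      inv_mul_lt_iff₀ (abs_pos.2 hc), not_lt, mul_comm]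
    exact h

end OnePoint

lemma ContinuousAt.divOrInfty {V Z : Type*} [NormedAddCommGroup V] [NormedSpace ℝ V]
    [TopologicalSpace Z] {c : Z → ℝ} {w : Z → V} {z : Z} (hc : ContinuousAt c z)
    (hw : ContinuousAt w z) (h : c z ≠ 0 ∨ w z ≠ 0) :
    ContinuousAt (fun y => OnePoint.divOrInfty (c y) (w y)) z := by
  by_cases hcz : c z = 0
  · have hwz : 0 < ‖w z‖ := norm_pos_iff.2 (h.resolve_left (not_not.2 hcz))
    have hz : OnePoint.divOrInfty (c z) (w z) = ∞ := if_pos hcz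
    simp only [ContinuousAt, hz]
    refine tendsto_nhds_infty_of_eventually_notMem_image_ball 0 fun R => ?_
    have hlt : ∀ᶠ y in 𝓝 z, R * |c y| < ‖w y‖ :=
      (continuousAt_const.mul hc.abs).eventually_lt hw.norm (by simpa [hcz] using hwz)
    exact hlt.mono fun y hy => divOrInfty_notMem_image_ball hy.le
  · refine (continuous_coe.continuousAt.comp ((hc.inv₀ hcz).smul hw)).congr ?_
    filter_upwards [hc.eventually_ne hcz] with y hy
    simp [OnePoint.divOrInfty, hy]

section RadialCollapse

variable (ε : ℝ)

def collapseScale (t r : ℝ) : ℝ :=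
  (1 - t) * max (ε - r) 0 + t

variable {ε}

lemma collapseScale_of_le (t : ℝ) {r : ℝ} (hr : ε ≤ r) : collapseScale ε t r = t := by
  simp [collapseScale, hr]

lemma collapseScale_zero_pos (hε : 0 < ε) (t : I) : 0 < collapseScale ε t 0 := by
  simp only [collapseScale, sub_zero, max_eq_left hε.le]
  rcases t.2.1.eq_or_lt with ht | ht
  · simp [← ht, hε]
  · nlinarith [t.2.2]

variable {V : Type*} [NormedAddCommGroup V] [NormedSpace ℝ V] (ε)

def radialCollapse (p : I × OnePoint V) : OnePoint V :=
  p.2.elim ∞ fun v => divOrInfty (collapseScale ε p.1 ‖v‖) v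

variable {ε}

lemma radialCollapse_coe_of_le (t : I) {v : V} (hv : ε ≤ ‖v‖) :
    radialCollapse ε (t, ↑v) = divOrInfty t v := by
  simp [radialCollapse, collapseScale_of_le _ hv]

lemma radialCollapse_one (x : OnePoint V) : radialCollapse ε (1, x) = x := by
  induction x using OnePoint.rec with
  | infty => rfl
  | coe v => simp [radialCollapse, collapseScale, divOrInfty]

lemma radialCollapse_zero_of_notMem {x : OnePoint V}
    (hx : x ∉ ((↑) : V → OnePoint V) '' ball 0 ε) : radialCollapse ε (0, x) = ∞ := by
  induction x using OnePoint.rec with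
  | infty => rfl
  | coe v =>
    rw [radialCollapse_coe_of_le 0 (by simpa [coe_injective.mem_set_image] using hx)]
    simp [divOrInfty]

lemma radialCollapse_notMem_image_ball (t : I) {x : OnePoint V}
    (hx : x ∉ ((↑) : V → OnePoint V) '' ball 0 ε) :
    radialCollapse ε (t, x) ∉ ((↑) : V → OnePoint V) '' ball 0 ε := by
  induction x using OnePoint.rec with
  | infty => exact infty_notMem_image_coe
  | coe v =>
    have hv : ε ≤ ‖v‖ := by simpa [coe_injective.mem_set_image] using hx
    rw [radialCollapse_coe_of_le t hv]
    exact divOrInfty_notMem_image_ball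
      (by nlinarith [t.2.1, t.2.2, abs_of_nonneg t.2.1, norm_nonneg v])

variable [ProperSpace V]

lemma continuous_radialCollapse (hε : 0 < ε) : Continuous (radialCollapse (V := V) ε) := by
  rw [continuous_iff_continuousAt]
  rintro ⟨t, x⟩
  induction x using OnePoint.rec with
  | coe v =>
    have hemb : IsOpenEmbedding (Prod.map (id : I → I) ((↑) : V → OnePoint V)) :=
      IsOpenEmbedding.id.prodMap isOpenEmbedding_coe
    refine (hemb.continuousAt_iff (x := (t, v))).1 ?_
    refine ContinuousAt.divOrInfty (by unfold collapseScale; fun_prop) continuousAt_snd ?_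
    rcases eq_or_ne v 0 with rfl | hv
    · exact Or.inl (by simpa using (collapseScale_zero_pos hε t).ne')
    · exact Or.inr hv
  | infty =>
    refine tendsto_nhds_infty_of_eventually_notMem_image_ball 0 fun R => ?_
    have hnhds : (((↑) : V → OnePoint V) '' closedBall 0 (max R ε))ᶜ ∈ 𝓝 ∞ :=
      (isOpen_compl_image_coe.2 ⟨isClosed_closedBall, isCompact_closedBall _ _⟩).mem_nhds
        infty_notMem_image_coe
    filter_upwards [prod_mem_nhds (Filter.univ_mem (f := 𝓝 t)) hnhds]
    rintro ⟨s, x⟩ ⟨-, hx⟩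
    induction x using OnePoint.rec with
    | infty => exact infty_notMem_image_coe
    | coe w =>
      have hw : max R ε < ‖w‖ := by simpa [coe_injective.mem_set_image] using hx
      rw [radialCollapse_coe_of_le s ((le_max_right R ε).trans hw.le)]
      exact divOrInfty_notMem_image_ball
        (by nlinarith [le_max_left R ε, le_max_right R ε, s.2.1, s.2.2, abs_of_nonneg s.2.1])

def radialCollapseHomotopy (hε : 0 < ε) :
    ContinuousMap.Homotopy
      (ContinuousMap.curry ⟨radialCollapse ε, continuous_radialCollapse hε⟩ 0)
      (ContinuousMap.id (OnePoint V)) where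
  toFun := radialCollapse ε
  continuous_toFun := continuous_radialCollapse hε
  map_zero_left _ := rfl
  map_one_left := radialCollapse_one

end RadialCollapse

lemma C_eq_compl_image_ball (n : ℕ) (ε : ℝ) : C n ε = ((↑) '' ball (0 : E n) ε)ᶜ := by
  rw [compl_image_coe, C, Set.union_comm]
  congr
  ext v
  simp

/-- The collapse map `S^n → B̄_ε(0)/∂B̄_ε(0)`, i.e. the quotient map from the one-point
compactification of `ℝⁿ` that crushes the closed set
`C = {∞} ∪ {v : ε ≤ ‖v‖}` to a point, is a homotopy equivalence: there is a continuous
map `X/C → X` such that both composites are homotopic to the respective identities. -/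
theorem collapse_homotopyEquiv (n : ℕ) (ε : ℝ) (hε : 0 < ε) :
    ∃ g : C(XmodC n ε, X n),
      ((collapseMap n ε).comp g).Homotopic (ContinuousMap.id (XmodC n ε)) ∧
      (g.comp (collapseMap n ε)).Homotopic (ContinuousMap.id (X n)) := by
  let F := radialCollapseHomotopy (V := E n) hε
  have hf : ∀ a b, collapseSetoid n ε a b → F (0, a) = F (0, b) := by
    rintro a b (rfl | ⟨ha, hb⟩)
    · rfl
    · rw [C_eq_compl_image_ball] at ha hb
      exact (radialCollapse_zero_of_notMem ha).trans (radialCollapse_zero_of_notMem hb).symm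
  have hF : ∀ t a b, collapseSetoid n ε a b → collapseSetoid n ε (F (t, a)) (F (t, b)) := by
    rintro t a b (rfl | ⟨ha, hb⟩)
    · exact Or.inl rfl
    · rw [C_eq_compl_image_ball] at ha hb
      exact Or.inr ⟨C_eq_compl_image_ball n ε ▸ radialCollapse_notMem_image_ball t ha,
        C_eq_compl_image_ball n ε ▸ radialCollapse_notMem_image_ball t hb⟩
  let e := F.homotopyEquivQuotient (collapseSetoid n ε) hf hF
  exact ⟨e.invFun, e.right_inv, e.left_inv⟩

end
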